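/- For pairwise distinct positive reals β₁, β₂, β₃, with h₂ and h₃ the second and third iterated exponential convolution kernels, ∫₀^∞ h₂(t) h₃(t) dt = (β₁+β₂+β₃)/(2 β₁ β₂ (β₁+β₂)(β₁+β₃)(β₂+β₃)). -/

import Mathlib

set_option maxHeartbeats 1600000
open MeasureTheory Real Set Filter

lemma int_exp (a : ℝ) (ha : 0 < a) :
    ∫ t in Set.Ioi (0:ℝ), Real.exp (-a * t) = 1 / a := by
  have key := integral_Ioi_of_hasDerivAt_of_tendsto
    (f := fun t => -Real.exp (-a * t) / a) (f' := fun t => Real.exp (-a * t)) (a := 0) (m := 0)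
    (Continuous.continuousWithinAt (by continuity)) ?_ ?_ ?_
  · rw [key]; field_simp; simp
  · intro x _
    have : HasDerivAt (fun t => -a * t) (-a) x := by simpa using (hasDerivAt_id x).const_mul (-a)
    have h2 := (this.exp).neg.div_const a
    convert h2 using 1
    · rfl
    · rfl
    · rw [eq_div_iff ha.ne']; ring
  · simpa [neg_mul] using exp_neg_integrableOn_Ioi 0 ha
  · have h1 : Tendsto (fun t : ℝ => a * t) atTop atTop := Filter.tendsto_id.const_mul_atTop ha
    have h2 : Tendsto (fun t : ℝ => Real.exp (-a * t)) atTop (nhds 0) := by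
      have := Real.tendsto_exp_neg_atTop_nhds_zero.comp h1
      simpa only [Function.comp_def, neg_mul] using this
    simpa using (h2.neg.div_const a)

lemma int_exp_integrable (a : ℝ) (ha : 0 < a) :
    IntegrableOn (fun t => Real.exp (-a * t)) (Set.Ioi (0:ℝ)) := by
  simpa [neg_mul] using exp_neg_integrableOn_Ioi 0 ha

lemma int_five (a b c d e A B C D E : ℝ) (ha : 0 < a) (hb : 0 < b) (hc : 0 < c)
    (hd : 0 < d) (he : 0 < e) :
    ∫ t in Set.Ioi (0:ℝ),
      (A * Real.exp (-a * t) + (B * Real.exp (-b * t) + (C * Real.exp (-c * t)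
        + (D * Real.exp (-d * t) + E * Real.exp (-e * t)))))
      = A / a + B / b + C / c + D / d + E / e := by
  have iA := (int_exp_integrable a ha).const_mul A
  have iB := (int_exp_integrable b hb).const_mul B
  have iC := (int_exp_integrable c hc).const_mul C
  have iD := (int_exp_integrable d hd).const_mul D
  have iE := (int_exp_integrable e he).const_mul E
  have iDE : Integrable (fun x => D * Real.exp (-d * x) + E * Real.exp (-e * x)) (volume.restrict (Set.Ioi 0)) := iD.add iE
  have iCDE : Integrable (fun x => C * Real.exp (-c * x) + (D * Real.exp (-d * x) + E * Real.exp (-e * x))) (volume.restrict (Set.Ioi 0)) := iC.add iDE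
  have iBCDE : Integrable (fun x => B * Real.exp (-b * x) + (C * Real.exp (-c * x) + (D * Real.exp (-d * x) + E * Real.exp (-e * x)))) (volume.restrict (Set.Ioi 0)) := iB.add iCDE
  rw [integral_add iA iBCDE, integral_add iB iCDE, integral_add iC iDE, integral_add iD iE,
    integral_const_mul, integral_const_mul, integral_const_mul, integral_const_mul,
    integral_const_mul, int_exp a ha, int_exp b hb, int_exp c hc, int_exp d hd, int_exp e he]
  ring

theorem h2_h3_integral (β₁ β₂ β₃ : ℝ) (hβ₁ : 0 < β₁) (hβ₂ : 0 < β₂)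
    (hβ₃ : 0 < β₃) (h12 : β₁ ≠ β₂) (h13 : β₁ ≠ β₃) (h23 : β₂ ≠ β₃) :
    ∫ t in Set.Ioi (0:ℝ),
        ((Real.exp (-β₂ * t) - Real.exp (-β₁ * t)) / (β₁ - β₂)) *
          (Real.exp (-β₁ * t) / ((β₁ - β₂) * (β₁ - β₃))
            + Real.exp (-β₂ * t) / ((β₂ - β₃) * (β₂ - β₁))
            + Real.exp (-β₃ * t) / ((β₃ - β₁) * (β₃ - β₂)))
      = (β₁ + β₂ + β₃)
          / (2 * β₁ * β₂ * (β₁ + β₂) * (β₁ + β₃) * (β₂ + β₃)) := by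
  have d12 : β₁ - β₂ ≠ 0 := sub_ne_zero.mpr h12
  have d13 : β₁ - β₃ ≠ 0 := sub_ne_zero.mpr h13
  have d23 : β₂ - β₃ ≠ 0 := sub_ne_zero.mpr h23
  have d21 : β₂ - β₁ ≠ 0 := sub_ne_zero.mpr (Ne.symm h12)
  have d31 : β₃ - β₁ ≠ 0 := sub_ne_zero.mpr (Ne.symm h13)
  have d32 : β₃ - β₂ ≠ 0 := sub_ne_zero.mpr (Ne.symm h23)
  set A : ℝ := -1 / ((β₁ - β₂)^2 * (β₁ - β₃)) with hA
  set B : ℝ := 1 / ((β₁ - β₂) * (β₂ - β₃) * (β₂ - β₁)) with hB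
  set C : ℝ := 1 / ((β₁ - β₂)^2 * (β₁ - β₃))
      - 1 / ((β₁ - β₂) * (β₂ - β₃) * (β₂ - β₁)) with hC
  set D : ℝ := -1 / ((β₁ - β₂) * (β₃ - β₁) * (β₃ - β₂)) with hD
  set E : ℝ := 1 / ((β₁ - β₂) * (β₃ - β₁) * (β₃ - β₂)) with hE
  rw [setIntegral_congr_fun measurableSet_Ioi
    (g := fun t => A * Real.exp (-(2*β₁) * t) + (B * Real.exp (-(2*β₂) * t)
      + (C * Real.exp (-(β₁+β₂) * t) + (D * Real.exp (-(β₁+β₃) * t)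
      + E * Real.exp (-(β₂+β₃) * t)))))]
  · rw [int_five (2*β₁) (2*β₂) (β₁+β₂) (β₁+β₃) (β₂+β₃) A B C D E
      (by linarith) (by linarith) (by linarith) (by linarith) (by linarith)]
    rw [hA, hB, hC, hD, hE]
    have p1 : β₁ + β₂ ≠ 0 := by positivity
    have p2 : β₁ + β₃ ≠ 0 := by positivity
    have p3 : β₂ + β₃ ≠ 0 := by positivity
    field_simp
    ring
  · intro t _
    simp only
    have e1 : Real.exp (-(2*β₁) * t) = Real.exp (-β₁ * t) * Real.exp (-β₁ * t) := by
      rw [← Real.exp_add]; ring_nf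
    have e2 : Real.exp (-(2*β₂) * t) = Real.exp (-β₂ * t) * Real.exp (-β₂ * t) := by
      rw [← Real.exp_add]; ring_nf
    have e3 : Real.exp (-(β₁+β₂) * t) = Real.exp (-β₁ * t) * Real.exp (-β₂ * t) := by
      rw [← Real.exp_add]; ring_nf
    have e4 : Real.exp (-(β₁+β₃) * t) = Real.exp (-β₁ * t) * Real.exp (-β₃ * t) := by
      rw [← Real.exp_add]; ring_nf
    have e5 : Real.exp (-(β₂+β₃) * t) = Real.exp (-β₂ * t) * Real.exp (-β₃ * t) := by
      rw [← Real.exp_add]; ring_nf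
    rw [e1, e2, e3, e4, e5, hA, hB, hC, hD, hE]
    field_simp
    ring
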